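/- If g₁, …, g_m are elements of the first Grigorchuk group 𝒢 and f : C(m) → C(n) is a binary forest, then f ∘ (g₁ ⊕ ⋯ ⊕ g_m) = p_α ∘ (g₁' ⊕ ⋯ ⊕ g_n') ∘ f' for some binary forest f' : C(m) → C(n), some elements g₁', …, g_n' ∈ 𝒢, and some permutation α ∈ S_n. -/

import Mathlib

/-! Basic setup: the Cantor set `Δ = ℕ → Bool` and `C n = Fin n × Δ`,
the disjoint union of `n` copies of the Cantor set. -/

abbrev Δ : Type := ℕ → Bool
abbrev C (n : ℕ) : Type := Fin n × Δ

/-- A bijection between discrete spaces, as a homeomorphism. -/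
def discHomeo {X Y : Type*} [TopologicalSpace X] [TopologicalSpace Y]
    [DiscreteTopology X] [DiscreteTopology Y] (e : X ≃ Y) : X ≃ₜ Y :=
  ⟨e, continuous_of_discreteTopology, continuous_of_discreteTopology⟩

/-- The permutation homeomorphism `p_α : C n ≃ₜ C n`, permuting the copies
of the Cantor set according to `α`. -/
def permC {n : ℕ} (α : Equiv.Perm (Fin n)) : C n ≃ₜ C n :=
  (discHomeo α).prodCongr (Homeomorph.refl Δ)

/-- Cast between `C m` and `C n` when `m = n`. -/
def castC {m n : ℕ} (h : m = n) : C m ≃ₜ C n :=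
  (discHomeo (finCongr h)).prodCongr (Homeomorph.refl Δ)

/-- `C (m + n)` is the disjoint union of `C m` and `C n` (first `m` copies,
then the remaining `n` copies). -/
def toSum (m n : ℕ) : C (m + n) ≃ₜ (C m) ⊕ (C n) :=
  ((discHomeo finSumFinEquiv.symm).prodCongr (Homeomorph.refl Δ)).trans
    (Homeomorph.sumProdDistrib)

/-- The direct sum `f ⊕ g` of homeomorphisms, acting as `f` on the first `m`
copies (sent to the first `m'` copies) and as `g` on the last `n` copies. -/
def dsum {m m' n n' : ℕ} (f : C m ≃ₜ C m') (g : C n ≃ₜ C n') :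
    C (m + n) ≃ₜ C (m' + n') :=
  ((toSum m n).trans (f.sumCongr g)).trans (toSum m' n').symm

/-- The split homeomorphism `x : C 1 ≃ₜ C 2`: a sequence starting with letter
`i` is sent to the `(i+1)`-st copy of the Cantor set, deleting the first letter. -/
def split : C 1 ≃ₜ C 2 where
  toFun p := (finTwoEquiv.symm (p.2 0), fun k => p.2 (k + 1))
  invFun p := (0, fun k => Nat.casesOn k (finTwoEquiv p.1) (fun j => p.2 j))
  left_inv := by
    rintro ⟨i, w⟩
    refine Prod.ext (Subsingleton.elim _ _) ?_
    funext k
    cases k <;> simp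
  right_inv := by
    rintro ⟨i, w⟩
    refine Prod.ext ?_ rfl
    simp
  continuous_toFun := by
    refine Continuous.prodMk ?_ ?_
    · exact Continuous.comp continuous_of_discreteTopology
        ((continuous_apply 0).comp continuous_snd)
    · exact continuous_pi fun k => (continuous_apply (k + 1)).comp continuous_snd
  continuous_invFun := by
    refine Continuous.prodMk continuous_const ?_
    refine continuous_pi fun k => ?_
    cases k with
    | zero => exact Continuous.comp continuous_of_discreteTopology continuous_fst
    | succ j => exact (continuous_apply j).comp continuous_snd

/-- The split homeomorphism `x_i^{(n)} = id_{i-1} ⊕ x ⊕ id_{n-i} : C n ≃ₜ C (n+1)`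
(with `i` zero-indexed, so `i : Fin n` splits the `(i+1)`-st copy). -/
def splitAt {n : ℕ} (i : Fin n) : C n ≃ₜ C (n + 1) :=
  ((castC (show n = (i : ℕ) + 1 + (n - 1 - i) by have := i.isLt; omega)).trans
    (dsum (dsum (Homeomorph.refl (C i)) split) (Homeomorph.refl (C (n - 1 - i))))).trans
    (castC (show (i : ℕ) + 2 + (n - 1 - i) = n + 1 by have := i.isLt; omega))

/-- `IsForest f` says that `f : C m ≃ₜ C n` is a binary forest, i.e. a
(possibly empty) composition of split homeomorphisms.  A binary tree is a
binary forest with domain `C 1`. -/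
inductive IsForest : ∀ {m n : ℕ}, (C m ≃ₜ C n) → Prop where
  | refl (m : ℕ) : IsForest (Homeomorph.refl (C m))
  | step {m n : ℕ} {f : C m ≃ₜ C n} (i : Fin n) (hf : IsForest f) :
      IsForest (f.trans (splitAt i))

/-! The Grigorchuk generators `σ, b, c, d`, defined via the Grigorchuk automaton:
on binary sequences, `σ` flips the first letter, and `b(0w)=0σ(w)`, `b(1w)=1c(w)`,
`c(0w)=0σ(w)`, `c(1w)=1d(w)`, `d(0w)=0w`, `d(1w)=1b(w)`. -/

/-- States of the Grigorchuk automaton: the identity, `σ`, `b`, `c`, `d`. -/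
inductive GS : Type | e | s | b | c | d
deriving DecidableEq

instance instFintypeGS : Fintype GS :=
  ⟨{.e, .s, .b, .c, .d}, by intro x; cases x <;> decide⟩

instance : TopologicalSpace GS := ⊥
instance : DiscreteTopology GS := ⟨rfl⟩

/-- Output function of the Grigorchuk automaton. -/
def GS.out : GS → Bool → Bool
  | .s, i => !i
  | _,  i => i

/-- Transition function of the Grigorchuk automaton. -/
def GS.step : GS → Bool → GS
  | .e, _ => .e
  | .s, _ => .e
  | .b, false => .s
  | .b, true  => .c
  | .c, false => .s
  | .c, true  => .d
  | .d, false => .e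
  | .d, true  => .b

/-- The state of the automaton started in state `g` after reading `w 0, …, w (n-1)`. -/
def GS.stArr (g : GS) (w : Δ) : ℕ → GS
  | 0 => g
  | n + 1 => (GS.stArr g w n).step (w n)

/-- The action of the automaton state `g` on infinite binary sequences. -/
def GS.act (g : GS) (w : Δ) : Δ := fun n => (GS.stArr g w n).out (w n)

lemma GS.out_out : ∀ (g : GS) (i : Bool), g.out (g.out i) = i := by decide

lemma GS.step_out : ∀ (g : GS) (i : Bool), g.step (g.out i) = g.step i := by decide

lemma GS.stArr_act (g : GS) (w : Δ) : ∀ n, GS.stArr g (GS.act g w) n = GS.stArr g w n := by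
  intro n
  induction n with
  | zero => rfl
  | succ n ih => rw [GS.stArr, GS.stArr, ih, GS.act, GS.step_out]

lemma GS.act_act (g : GS) (w : Δ) : GS.act g (GS.act g w) = w := by
  funext n
  rw [GS.act, GS.stArr_act, GS.act, GS.out_out]

lemma GS.continuous_stArr (g : GS) (n : ℕ) : Continuous (fun w : Δ => GS.stArr g w n) := by
  induction n with
  | zero => exact continuous_const
  | succ n ih =>
      exact Continuous.comp (f := fun w : Δ => ((GS.stArr g w n), w n))
        (g := fun p : GS × Bool => p.1.step p.2)
        continuous_of_discreteTopology (ih.prodMk (continuous_apply n))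

lemma GS.continuous_act (g : GS) : Continuous (GS.act g) := by
  refine continuous_pi fun n => ?_
  exact Continuous.comp (f := fun w : Δ => ((GS.stArr g w n), w n))
    (g := fun p : GS × Bool => p.1.out p.2)
    continuous_of_discreteTopology ((GS.continuous_stArr g n).prodMk (continuous_apply n))

/-- The homeomorphism of the Cantor set determined by an automaton state. -/
def GS.homeo (g : GS) : Δ ≃ₜ Δ where
  toFun := GS.act g
  invFun := GS.act g
  left_inv := GS.act_act g
  right_inv := GS.act_act g
  continuous_toFun := GS.continuous_act g
  continuous_invFun := GS.continuous_act g

/-- Lift a homeomorphism of the Cantor set to `C 1`. -/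
def liftC1 (h : Δ ≃ₜ Δ) : C 1 ≃ₜ C 1 := (Homeomorph.refl (Fin 1)).prodCongr h

/-- The Grigorchuk generator `σ` (flips the first letter). -/
def gσ : C 1 ≃ₜ C 1 := liftC1 (GS.homeo .s)
/-- The Grigorchuk generator `b`. -/
def gb : C 1 ≃ₜ C 1 := liftC1 (GS.homeo .b)
/-- The Grigorchuk generator `c`. -/
def gc : C 1 ≃ₜ C 1 := liftC1 (GS.homeo .c)
/-- The Grigorchuk generator `d`. -/
def gd : C 1 ≃ₜ C 1 := liftC1 (GS.homeo .d)

/-- The group of self-homeomorphisms of `C n`, with `(f * g) x = f (g x)`. -/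
instance homeoGroup (n : ℕ) : Group (C n ≃ₜ C n) where
  mul f g := g.trans f
  one := Homeomorph.refl _
  inv := Homeomorph.symm
  mul_assoc a b c := rfl
  one_mul a := rfl
  mul_one a := rfl
  inv_mul_cancel a := Homeomorph.self_trans_symm a

/-- The first Grigorchuk group `𝒢 = ⟨σ, b, c, d⟩`. -/
def Grig : Subgroup (C 1 ≃ₜ C 1) :=
  Subgroup.closure {gσ, gb, gc, gd}

/-- The set `K = {1, b, c, d}` of homeomorphisms of `C 1`. -/
def Kset : Set (C 1 ≃ₜ C 1) := {Homeomorph.refl (C 1), gb, gc, gd}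

/-- The `n`-fold direct sum `k₁ ⊕ ⋯ ⊕ k_n` of homeomorphisms of `C 1`. -/
def dsumFam : {n : ℕ} → (Fin n → (C 1 ≃ₜ C 1)) → (C n ≃ₜ C n)
  | 0, _ => Homeomorph.refl _
  | n + 1, k => dsum (dsumFam (fun i : Fin n => k i.castSucc)) (k (Fin.last n))

/-- The direct sum `h₁ ⊕ ⋯ ⊕ h_n` of a family of homeomorphisms
`h i : C 1 ≃ₜ C (m i)`. -/
def dsumFamH : {n : ℕ} → {m : Fin n → ℕ} → (∀ i, C 1 ≃ₜ C (m i)) →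
    (C n ≃ₜ C (∑ i, m i))
  | 0, _, _ => castC (by simp)
  | n + 1, m, h =>
      (dsum (dsumFamH (fun i : Fin n => h i.castSucc)) (h (Fin.last n))).trans
        (castC (Fin.sum_univ_castSucc m).symm)

/-- The group `K_n = {p_α ∘ (k₁ ⊕ ⋯ ⊕ k_n) : α ∈ S_n, kᵢ ∈ K}`. -/
def Kn (n : ℕ) : Set (C n ≃ₜ C n) :=
  {h | ∃ (α : Equiv.Perm (Fin n)) (k : Fin n → (C 1 ≃ₜ C 1)),
    (∀ i, k i ∈ Kset) ∧ h = (dsumFam k).trans (permC α)}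

/-- `σ_j : C m ≃ₜ C m`, acting as `σ` on the `(j+1)`-st copy (zero-indexed `j`)
of the Cantor set and as the identity elsewhere. -/
def sigmaAt {m : ℕ} (j : Fin m) : C m ≃ₜ C m :=
  dsumFam (fun i => if i = j then gσ else Homeomorph.refl (C 1))

/-- Membership in the groupoid `𝔙` generated by all split homeomorphisms and
all permutation homeomorphisms. -/
inductive InV : ∀ {m n : ℕ}, (C m ≃ₜ C n) → Prop where
  | split {n : ℕ} (i : Fin n) : InV (splitAt i)
  | perm {n : ℕ} (α : Equiv.Perm (Fin n)) : InV (permC α)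
  | comp {m n p : ℕ} {f : C m ≃ₜ C n} {g : C n ≃ₜ C p} :
      InV f → InV g → InV (f.trans g)
  | inv {m n : ℕ} {f : C m ≃ₜ C n} : InV f → InV f.symm

/-- Membership in Röver's groupoid `𝔙𝒢`, generated by `𝔙` together with the
elements of the Grigorchuk group `𝒢`. -/
inductive InVG : ∀ {m n : ℕ}, (C m ≃ₜ C n) → Prop where
  | split {n : ℕ} (i : Fin n) : InVG (splitAt i)
  | perm {n : ℕ} (α : Equiv.Perm (Fin n)) : InVG (permC α)
  | grig {g : C 1 ≃ₜ C 1} : g ∈ Grig → InVG g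
  | comp {m n p : ℕ} {f : C m ≃ₜ C n} {g : C n ≃ₜ C p} :
      InVG f → InVG g → InVG (f.trans g)
  | inv {m n : ℕ} {f : C m ≃ₜ C n} : InVG f → InVG f.symm

/-- The coset `[f] = K_n f = {k ∘ f : k ∈ K_n}` of `f : C 1 ≃ₜ C n`. -/
def coset {n : ℕ} (f : C 1 ≃ₜ C n) : Set (C 1 ≃ₜ C n) :=
  {h | ∃ k ∈ Kn n, h = f.trans k}

/-- The ambient type for vertices of the poset `𝒫`: a rank `n` together with
a set of homeomorphisms `C 1 ≃ₜ C n`. -/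
def PP : Type := Σ n : ℕ, Set (C 1 ≃ₜ C n)

/-- A member of `PP` is a vertex of `𝒫` if it is the coset `[f] = K_n f` of
some `f : C 1 ≃ₜ C n` in Röver's groupoid. -/
def IsVert (v : PP) : Prop :=
  ∃ f : C 1 ≃ₜ C v.1, InVG f ∧ v.2 = coset f

/-- `w` is a splitting of `v` if `v = [f]` and `w = [x_i ∘ f]` for some
representative `f` and some index `i`. -/
def SplittingOf (v w : PP) : Prop :=
  ∃ (n : ℕ) (f : C 1 ≃ₜ C n) (i : Fin n), InVG f ∧
    v = ⟨n, coset f⟩ ∧ w = ⟨n + 1, coset (f.trans (splitAt i))⟩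

/-- `w` is an expansion of `v` (written `v ≤ w`): `w` is obtained from `v` by
a finite (possibly empty) sequence of splittings. -/
def Expansion : PP → PP → Prop := Relation.ReflTransGen SplittingOf

/-- The four possible elementary pieces `1, x, σ₁ ∘ x, x₁ ∘ x` (with their
ranks), used to define elementary expansions. -/
def elemSet : Set (Σ m : ℕ, (C 1 ≃ₜ C m)) :=
  {⟨1, Homeomorph.refl (C 1)⟩, ⟨2, split⟩,
   ⟨2, split.trans (sigmaAt (0 : Fin 2))⟩,
   ⟨3, split.trans (splitAt (0 : Fin 2))⟩}

/-- `w` is an elementary expansion of `v`: `v = [f]` and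
`w = [(u₁ ⊕ ⋯ ⊕ u_n) ∘ f]` where each `uᵢ ∈ {1, x, σ₁∘x, x₁∘x}`. -/
def ElemExp (v w : PP) : Prop :=
  ∃ (n : ℕ) (f : C 1 ≃ₜ C n) (m : Fin n → ℕ) (h : ∀ i, C 1 ≃ₜ C (m i)),
    InVG f ∧ (∀ i, (⟨m i, h i⟩ : Σ m : ℕ, (C 1 ≃ₜ C m)) ∈ elemSet) ∧
    v = ⟨n, coset f⟩ ∧ w = ⟨∑ i, m i, coset (f.trans (dsumFamH h))⟩

/-! Every `g ∈ 𝒢` is self-similar: `x ∘ g = p_β ∘ (g₀ ⊕ g₁) ∘ x` with `g₀, g₁ ∈ 𝒢`. For the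
generators this is the wreath recursion of the Grigorchuk automaton, and it survives products;
since the generators are involutions, no inverses need to be treated. Consequently, if
`P = p_α ∘ (g₁ ⊕ ⋯ ⊕ g_n)` with all `gᵢ ∈ 𝒢`, then `x_i ∘ P = P' ∘ x_j` for some `j` and some `P'`
of the same shape: the permutation passes the split by doubling the point `α⁻¹ i`, and the
direct sum by replacing `g_j` with its two sections `g₀, g₁`. Pushing `g₁ ⊕ ⋯ ⊕ g_m` through the
forest one split at a time gives the theorem. -/

def onCantor (h : C 1 ≃ₜ C 1) (w : Δ) : Δ := (h (0, w)).2

lemma apply_eq_onCantor (h : C 1 ≃ₜ C 1) (p : C 1) : h p = (0, onCantor h p.2) := by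
  obtain ⟨q, w⟩ := p
  obtain rfl : q = 0 := Subsingleton.elim _ _
  exact Prod.ext (Subsingleton.elim _ _) rfl

lemma onCantor_trans (a b : C 1 ≃ₜ C 1) (w : Δ) :
    onCantor (a.trans b) w = onCantor b (onCantor a w) := by
  rw [onCantor, Homeomorph.trans_apply, apply_eq_onCantor a]; rfl

lemma permC_apply {n : ℕ} (α : Equiv.Perm (Fin n)) (q : Fin n) (w : Δ) :
    permC α (q, w) = (α q, w) := rfl

lemma castC_apply {m n : ℕ} (h : m = n) (q : Fin m) (w : Δ) :
    castC h (q, w) = (finCongr h q, w) := rfl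

lemma split_apply (w : Δ) : split (0, w) = (finTwoEquiv.symm (w 0), fun k => w (k + 1)) := rfl

lemma dsum_apply_castAdd {m m' n n' : ℕ} (f : C m ≃ₜ C m') (g : C n ≃ₜ C n')
    (q : Fin m) (w : Δ) :
    dsum f g (Fin.castAdd n q, w) = (Fin.castAdd n' (f (q, w)).1, (f (q, w)).2) := by
  simp [dsum, toSum, discHomeo, Homeomorph.trans, Homeomorph.prodCongr,
    Homeomorph.sumProdDistrib, Homeomorph.sumCongr, Equiv.sumProdDistrib, Prod.map]

lemma dsum_apply_natAdd {m m' n n' : ℕ} (f : C m ≃ₜ C m') (g : C n ≃ₜ C n')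
    (q : Fin n) (w : Δ) :
    dsum f g (Fin.natAdd m q, w) = (Fin.natAdd m' (g (q, w)).1, (g (q, w)).2) := by
  simp [dsum, toSum, discHomeo, Homeomorph.trans, Homeomorph.prodCongr,
    Homeomorph.sumProdDistrib, Homeomorph.sumCongr, Equiv.sumProdDistrib, Prod.map]

lemma dsumFam_apply {n : ℕ} (k : Fin n → (C 1 ≃ₜ C 1)) (q : Fin n) (w : Δ) :
    dsumFam k (q, w) = (q, onCantor (k q) w) := by
  induction n with
  | zero => exact q.elim0
  | succ n ih =>
    cases q using Fin.lastCases with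
    | last =>
      rw [dsumFam, show Fin.last n = Fin.natAdd n (0 : Fin 1) from rfl, dsum_apply_natAdd]
      exact Prod.ext (Fin.ext (by simp)) rfl
    | cast p =>
      change dsum _ _ (Fin.castAdd 1 p, w) = _
      rw [dsum_apply_castAdd, ih]
      rfl

lemma splitAt_apply_of_lt {n : ℕ} {i q : Fin n} (h : q < i) (w : Δ) :
    splitAt i (q, w) = (q.castSucc, w) := by
  have hq : finCongr (show n = (i : ℕ) + 1 + (n - 1 - i) by omega) q
      = Fin.castAdd (n - 1 - i) (Fin.castAdd 1 (⟨q, h⟩ : Fin i)) := by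
    ext; simp
  simp only [splitAt, Homeomorph.trans_apply, castC_apply]
  rw [hq, dsum_apply_castAdd, dsum_apply_castAdd, castC_apply]
  exact Prod.ext (Fin.ext (by simp)) rfl

lemma splitAt_apply_of_gt {n : ℕ} {i q : Fin n} (h : i < q) (w : Δ) :
    splitAt i (q, w) = (q.succ, w) := by
  have hq : finCongr (show n = (i : ℕ) + 1 + (n - 1 - i) by omega) q
      = Fin.natAdd ((i : ℕ) + 1) (⟨q - (i + 1), by omega⟩ : Fin (n - 1 - i)) := by
    ext; simp; omega
  simp only [splitAt, Homeomorph.trans_apply, castC_apply]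
  rw [hq, dsum_apply_natAdd, castC_apply]
  exact Prod.ext (Fin.ext (by simp; omega)) rfl

lemma splitAt_apply_of_ne {n : ℕ} {i q : Fin n} (h : q ≠ i) (w : Δ) :
    splitAt i (q, w) = (i.succ.succAbove q, w) := by
  rcases h.lt_or_gt with h | h
  · rw [splitAt_apply_of_lt h, Fin.succAbove_succ_of_le _ _ h.le]
  · rw [splitAt_apply_of_gt h, Fin.succAbove_succ_of_lt _ _ h]

def children {n : ℕ} (j : Fin n) : Fin 2 ↪ Fin (n + 1) :=
  ⟨![j.castSucc, j.succ], by
    intro a b hab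
    fin_cases a <;> fin_cases b <;> simp_all [Fin.ext_iff]⟩

@[simp] lemma children_zero {n : ℕ} (j : Fin n) : children j 0 = j.castSucc := rfl

@[simp] lemma children_one {n : ℕ} (j : Fin n) : children j 1 = j.succ := rfl

lemma splitAt_apply_self {n : ℕ} (j : Fin n) (w : Δ) :
    splitAt j (j, w) = (children j (split (0, w)).1, (split (0, w)).2) := by
  have hj : finCongr (show n = (j : ℕ) + 1 + (n - 1 - j) by omega) j
      = Fin.castAdd (n - 1 - j) (Fin.natAdd j (0 : Fin 1)) := by
    ext; simp
  simp only [splitAt, Homeomorph.trans_apply, castC_apply]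
  rw [hj, dsum_apply_castAdd, dsum_apply_natAdd, castC_apply]
  refine Prod.ext (Fin.ext ?_) rfl
  cases hw : w 0 <;> simp [split_apply, finTwoEquiv, hw]

lemma GS.act_e (w : Δ) : GS.act .e w = w := by
  have stArr_e : ∀ n, GS.stArr .e w n = .e := fun n => by
    induction n with
    | zero => rfl
    | succ n ih => rw [GS.stArr, ih]; rfl
  funext n
  rw [GS.act, stArr_e]
  rfl

lemma GS.act_tail (a : GS) (w : Δ) (k : ℕ) :
    GS.act a w (k + 1) = GS.act (a.step (w 0)) (fun j => w (j + 1)) k := by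
  have stArr_succ : ∀ n, GS.stArr a w (n + 1) = GS.stArr (a.step (w 0)) (fun j => w (j + 1)) n :=
    fun n => by
      induction n with
      | zero => rfl
      | succ n ih => rw [GS.stArr, ih]; rfl
  rw [GS.act, GS.act, stArr_succ]

def GS.toC1 (a : GS) : C 1 ≃ₜ C 1 := liftC1 a.homeo

lemma GS.toC1_symm (a : GS) : a.toC1.symm = a.toC1 := rfl

lemma GS.onCantor_toC1 (a : GS) (w : Δ) : onCantor a.toC1 w = a.act w := rfl

lemma GS.toC1_mem_grig : ∀ a : GS, a.toC1 ∈ Grig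
  | .e => by
    convert one_mem Grig
    exact Homeomorph.ext fun ⟨q, w⟩ => Prod.ext rfl (GS.act_e w)
  | .s => Subgroup.subset_closure (Or.inl rfl)
  | .b => Subgroup.subset_closure (Or.inr (Or.inl rfl))
  | .c => Subgroup.subset_closure (Or.inr (Or.inr (Or.inl rfl)))
  | .d => Subgroup.subset_closure (Or.inr (Or.inr (Or.inr rfl)))

lemma GS.toC1_trans_split (a : GS) :
    a.toC1.trans split = split.trans ((dsumFam fun t => (a.step (finTwoEquiv t)).toC1).trans
      (permC (if a = .s then Equiv.swap 0 1 else 1))) := by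
  refine Homeomorph.ext fun ⟨q, w⟩ => ?_
  obtain rfl : q = 0 := Subsingleton.elim _ _
  rw [Homeomorph.trans_apply, apply_eq_onCantor]
  simp only [Homeomorph.trans_apply, split_apply, dsumFam_apply, permC_apply,
    GS.onCantor_toC1, Equiv.apply_symm_apply]
  refine Prod.ext ?_ (funext fun k => GS.act_tail a w k)
  change finTwoEquiv.symm (a.out (w 0)) = (if a = .s then Equiv.swap 0 1 else 1) _
  generalize w 0 = b
  cases a <;> cases b <;> decide

def grigWreath (n : ℕ) : Set (C n ≃ₜ C n) :=
  {h | ∃ (g : Fin n → (C 1 ≃ₜ C 1)) (α : Equiv.Perm (Fin n)), (∀ i, g i ∈ Grig) ∧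
    h = (dsumFam g).trans (permC α)}

lemma dsumFam_trans_permC_apply {n : ℕ} (g : Fin n → (C 1 ≃ₜ C 1)) (α : Equiv.Perm (Fin n))
    (q : Fin n) (w : Δ) : (dsumFam g).trans (permC α) (q, w) = (α q, onCantor (g q) w) := by
  rw [Homeomorph.trans_apply, dsumFam_apply, permC_apply]

lemma trans_mem_grigWreath {n : ℕ} {a b : C n ≃ₜ C n} (ha : a ∈ grigWreath n)
    (hb : b ∈ grigWreath n) : a.trans b ∈ grigWreath n := by
  obtain ⟨g, α, hg, rfl⟩ := ha
  obtain ⟨g', α', hg', rfl⟩ := hb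
  refine ⟨fun i => (g i).trans (g' (α i)), α.trans α', fun i => mul_mem (hg' (α i)) (hg i),
    Homeomorph.ext fun ⟨q, w⟩ => ?_⟩
  simp only [Homeomorph.trans_apply, dsumFam_apply, permC_apply, onCantor_trans]
  rfl

lemma permC_mem_grigWreath {n : ℕ} (α : Equiv.Perm (Fin n)) : permC α ∈ grigWreath n :=
  ⟨fun _ => 1, α, fun _ => one_mem Grig, Homeomorph.ext fun ⟨q, w⟩ => by
    rw [dsumFam_trans_permC_apply]; rfl⟩

lemma dsumFam_mem_grigWreath {n : ℕ} {g : Fin n → (C 1 ≃ₜ C 1)} (hg : ∀ i, g i ∈ Grig) :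
    dsumFam g ∈ grigWreath n :=
  ⟨g, 1, hg, Homeomorph.ext fun _ => rfl⟩

def IsSelfSimilar (g : C 1 ≃ₜ C 1) : Prop :=
  ∃ P ∈ grigWreath 2, g.trans split = split.trans P

lemma isSelfSimilar_toC1 (a : GS) : IsSelfSimilar a.toC1 :=
  ⟨_, trans_mem_grigWreath (dsumFam_mem_grigWreath fun _ => GS.toC1_mem_grig _)
    (permC_mem_grigWreath _), GS.toC1_trans_split a⟩

lemma isSelfSimilar_of_mem_grig {g : C 1 ≃ₜ C 1} (hg : g ∈ Grig) : IsSelfSimilar g := by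
  have generator_eq : ∀ x ∈ ({gσ, gb, gc, gd} : Set (C 1 ≃ₜ C 1)), ∃ a : GS, x = a.toC1 := by
    rintro x (rfl | rfl | rfl | rfl)
    exacts [⟨.s, rfl⟩, ⟨.b, rfl⟩, ⟨.c, rfl⟩, ⟨.d, rfl⟩]
  induction hg using Subgroup.closure_induction'' with
  | mem x hx =>
    obtain ⟨a, rfl⟩ := generator_eq x hx
    exact isSelfSimilar_toC1 a
  | inv_mem x hx =>
    obtain ⟨a, rfl⟩ := generator_eq x hx
    exact (GS.toC1_symm a).symm ▸ isSelfSimilar_toC1 a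
  | one => exact ⟨1, permC_mem_grigWreath 1, rfl⟩
  | mul x y _ _ hx hy =>
    obtain ⟨P, hP, hxP⟩ := hx
    obtain ⟨Q, hQ, hyQ⟩ := hy
    refine ⟨Q.trans P, trans_mem_grigWreath hQ hP, ?_⟩
    change y.trans (x.trans split) = _
    rw [hxP]
    change (y.trans split).trans P = _
    rw [hyQ]
    rfl

def blowup {n : ℕ} (α : Equiv.Perm (Fin n)) (i : Fin n) : Equiv.Perm (Fin (n + 1)) :=
  (finSuccEquiv' (α.symm i).succ).trans ((Equiv.optionCongr α).trans (finSuccEquiv' i.succ).symm)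

lemma blowup_succAbove {n : ℕ} (α : Equiv.Perm (Fin n)) (i q : Fin n) :
    blowup α i ((α.symm i).succ.succAbove q) = i.succ.succAbove (α q) := by
  simp [blowup]

lemma blowup_children {n : ℕ} (α : Equiv.Perm (Fin n)) (i : Fin n) (t : Fin 2) :
    blowup α i (children (α.symm i) t) = children i t := by
  fin_cases t
  · simp [← Fin.succAbove_succ_self, blowup_succAbove]
  · simp [blowup]

lemma permC_trans_splitAt {n : ℕ} (α : Equiv.Perm (Fin n)) (i : Fin n) :
    (permC α).trans (splitAt i) = (splitAt (α.symm i)).trans (permC (blowup α i)) := by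
  refine Homeomorph.ext fun ⟨q, w⟩ => ?_
  rw [Homeomorph.trans_apply, Homeomorph.trans_apply, permC_apply]
  by_cases hq : q = α.symm i
  · subst hq
    rw [Equiv.apply_symm_apply, splitAt_apply_self, splitAt_apply_self, permC_apply,
      blowup_children]
  · have hq' : α q ≠ i := fun h => hq (by rw [← h, Equiv.symm_apply_apply])
    rw [splitAt_apply_of_ne hq', splitAt_apply_of_ne hq, permC_apply, blowup_succAbove]

lemma succAbove_notMem_range_children {n : ℕ} {j q : Fin n} (hq : q ≠ j) :
    j.succ.succAbove q ∉ Set.range (children j) := by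
  rintro ⟨t, ht⟩
  fin_cases t
  · exact hq (Fin.succAbove_right_injective (ht.symm.trans (Fin.succAbove_succ_self j).symm))
  · exact Fin.succAbove_ne _ _ ht.symm

lemma dsumFam_trans_splitAt {n : ℕ} {g : Fin n → (C 1 ≃ₜ C 1)} (hg : ∀ i, g i ∈ Grig)
    (j : Fin n) :
    ∃ P ∈ grigWreath (n + 1), (dsumFam g).trans (splitAt j) = (splitAt j).trans P := by
  obtain ⟨_, ⟨k, β, hk, rfl⟩, hgj⟩ := isSelfSimilar_of_mem_grig (hg j)
  set g' : Fin (n + 1) → (C 1 ≃ₜ C 1) := Fin.insertNth j.succ (k 1) (Function.update g j (k 0))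
  have g'_succAbove : ∀ q, q ≠ j → g' (j.succ.succAbove q) = g q := fun q hq => by
    simp only [g', Fin.insertNth_apply_succAbove, Function.update_of_ne hq]
  have g'_children : ∀ t, g' (children j t) = k t := Fin.forall_fin_two.mpr
    ⟨by simp only [g', children_zero, ← Fin.succAbove_succ_self, Fin.insertNth_apply_succAbove,
        Function.update_self],
     by simp only [g', children_one, Fin.insertNth_apply_same]⟩
  have g'_mem : ∀ r, g' r ∈ Grig := fun r => by
    induction r using Fin.succAboveCases j.succ with
    | x => exact g'_children 1 ▸ hk 1
    | p q =>
      by_cases hq : q = j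
      · subst hq
        exact Fin.succAbove_succ_self q ▸ g'_children 0 ▸ hk 0
      · exact (g'_succAbove q hq).symm ▸ hg q
  refine ⟨_, ⟨g', β.viaFintypeEmbedding (children j), g'_mem, rfl⟩,
    Homeomorph.ext fun ⟨q, w⟩ => ?_⟩
  rw [Homeomorph.trans_apply, Homeomorph.trans_apply, dsumFam_apply]
  by_cases hq : q = j
  · subst hq
    have hsplit : split (0, onCantor (g q) w) = (dsumFam k).trans (permC β) (split (0, w)) := by
      simpa only [Homeomorph.trans_apply, apply_eq_onCantor (g q)]
        using DFunLike.congr_fun hgj (0, w)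
    rw [splitAt_apply_self, splitAt_apply_self, hsplit]
    obtain ⟨t, v⟩ := split (0, w)
    rw [dsumFam_trans_permC_apply, dsumFam_trans_permC_apply,
      Equiv.Perm.viaFintypeEmbedding_apply_image, g'_children]
  · rw [splitAt_apply_of_ne hq, splitAt_apply_of_ne hq, dsumFam_trans_permC_apply,
      Equiv.Perm.viaFintypeEmbedding_apply_notMem_range _ _ (succAbove_notMem_range_children hq),
      g'_succAbove q hq]

lemma grigWreath_trans_splitAt {n : ℕ} {P : C n ≃ₜ C n} (hP : P ∈ grigWreath n) (i : Fin n) :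
    ∃ j, ∃ P' ∈ grigWreath (n + 1), P.trans (splitAt i) = (splitAt j).trans P' := by
  obtain ⟨g, α, hg, rfl⟩ := hP
  obtain ⟨Q, hQ, hgQ⟩ := dsumFam_trans_splitAt hg (α.symm i)
  refine ⟨α.symm i, Q.trans (permC (blowup α i)),
    trans_mem_grigWreath hQ (permC_mem_grigWreath _), ?_⟩
  change (dsumFam g).trans ((permC α).trans (splitAt i)) = _
  rw [permC_trans_splitAt]
  change ((dsumFam g).trans (splitAt (α.symm i))).trans (permC (blowup α i)) = _
  rw [hgQ]
  rfl

lemma IsForest.exists_grigWreath_trans_eq {m n : ℕ} {f : C m ≃ₜ C n} (hf : IsForest f)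
    {P : C m ≃ₜ C m} (hP : P ∈ grigWreath m) :
    ∃ (f' : C m ≃ₜ C n) (P' : C n ≃ₜ C n), IsForest f' ∧ P' ∈ grigWreath n ∧
      P.trans f = f'.trans P' := by
  induction hf with
  | refl => exact ⟨Homeomorph.refl _, P, .refl _, hP, rfl⟩
  | @step _ f₀ i _ ih =>
    obtain ⟨f₁, P₁, hf₁, hP₁, hPf⟩ := ih
    obtain ⟨j, P', hP', hP₁split⟩ := grigWreath_trans_splitAt hP₁ i
    refine ⟨f₁.trans (splitAt j), P', .step j hf₁, hP', ?_⟩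
    change (P.trans f₀).trans (splitAt i) = _
    rw [hPf]
    change f₁.trans (P₁.trans (splitAt i)) = _
    rw [hP₁split]
    rfl

theorem grig_forest_expansion (m n : ℕ) (f : C m ≃ₜ C n) (hf : IsForest f)
    (g : Fin m → (C 1 ≃ₜ C 1)) (hg : ∀ i, g i ∈ Grig) :
    ∃ (f' : C m ≃ₜ C n) (g' : Fin n → (C 1 ≃ₜ C 1)) (α : Equiv.Perm (Fin n)),
      IsForest f' ∧ (∀ i, g' i ∈ Grig) ∧
      (dsumFam g).trans f = (f'.trans (dsumFam g')).trans (permC α) := by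
  obtain ⟨f', _, hf', ⟨g', α, hg', rfl⟩, h⟩ :=
    hf.exists_grigWreath_trans_eq (dsumFam_mem_grigWreath hg)
  exact ⟨f', g', α, hf', hg', h⟩
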